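/- arXiv:1407.1112 — 2 statements merged into one kernel-verified Lean document; each statement's English description precedes it below -/
import Mathlib

section
/- Let K_x, K_y ≥ 0 and γ̄_x, γ̄_y > 0, with associated quantities a_x, a_y, B̃_x, B̃_y. Then for every γ ≥ 0, the double series Σ_{k=0}^∞ Σ_{n=0}^k B̃_x(n) B̃_y(k−n) Γ(n+1, a_x γ) Γ(k−n+1, a_y γ) converges (the sequence of partial sums over k converges to a finite limit). -/
open MeasureTheory Set
open scoped ProbabilityTheory

/-- The parameter `a = (1+K)/γ̄` of the Rician power (non-central chi-square) distribution. -/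
noncomputable def ra (K g : ℝ) : ℝ := (1 + K) / g

/-- The parameter `A = a·e^{-K}`. -/
noncomputable def rA (K g : ℝ) : ℝ := ra K g * Real.exp (-K)

/-- The series coefficients `B(k) = K^k a^k/(k!)²`. -/
noncomputable def rB (K g : ℝ) (k : ℕ) : ℝ := K ^ k * ra K g ^ k / ((k.factorial : ℝ)) ^ 2

/-- The normalized coefficients `B̃(k) = B(k)/a^{k+1}`. -/
noncomputable def rBt (K g : ℝ) (k : ℕ) : ℝ := rB K g k / ra K g ^ (k + 1)

/-- The upper incomplete gamma function `Γ(s, x) = ∫_x^∞ t^{s-1} e^{-t} dt`. -/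
noncomputable def uGamma (s x : ℝ) : ℝ := ∫ t in Set.Ioi x, t ^ (s - 1) * Real.exp (-t)

/-- The Rician power density `f(u) = A e^{-a u} Σ_k B(k) u^k` for `u > 0`, and `0` otherwise. -/
noncomputable def ricianDensity (K g u : ℝ) : ℝ :=
  if 0 < u then rA K g * Real.exp (-(ra K g) * u) * ∑' k : ℕ, rB K g k * u ^ k else 0

lemma uGamma_nonneg (s x : ℝ) (hx : 0 ≤ x) : 0 ≤ uGamma s x := by
  apply setIntegral_nonneg measurableSet_Ioi
  intro t ht
  exact mul_nonneg (Real.rpow_nonneg (le_of_lt (lt_of_le_of_lt hx ht)) _) (Real.exp_pos _).le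

lemma uGamma_le_factorial (n : ℕ) (x : ℝ) (hx : 0 ≤ x) :
    uGamma (n + 1) x ≤ n.factorial := by
  have hint : IntegrableOn (fun t : ℝ => t ^ ((n : ℝ) + 1 - 1) * Real.exp (-t)) (Ioi 0) := by
    have := Real.GammaIntegral_convergent (s := (n : ℝ) + 1) (by positivity)
    simpa [mul_comm] using this
  have h1 : uGamma (n + 1) x ≤ ∫ t in Ioi (0 : ℝ), t ^ ((n : ℝ) + 1 - 1) * Real.exp (-t) := by
    apply setIntegral_mono_set hint
    · filter_upwards [ae_restrict_mem measurableSet_Ioi] with t ht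
      exact mul_nonneg (Real.rpow_nonneg ht.le _) (Real.exp_pos _).le
    · exact HasSubset.Subset.eventuallyLE (Ioi_subset_Ioi hx)
  have h2 : (∫ t in Ioi (0 : ℝ), t ^ ((n : ℝ) + 1 - 1) * Real.exp (-t)) = n.factorial := by
    rw [← Real.Gamma_nat_eq_factorial, Real.Gamma_eq_integral (by positivity)]
    · simp [mul_comm]
  calc uGamma (n + 1) x ≤ _ := h1
    _ = n.factorial := h2

set_option maxHeartbeats 1000000 in
lemma summable_aux (K g : ℝ) (hK : 0 ≤ K) (hg : 0 < g) (γ : ℝ) (hγ : 0 ≤ γ) :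
    Summable fun n : ℕ => ‖rBt K g n * uGamma (n + 1) (ra K g * γ)‖ := by
  have ha : 0 < ra K g := div_pos (by linarith) hg
  have hx : 0 ≤ ra K g * γ := mul_nonneg ha.le hγ
  apply Summable.of_nonneg_of_le (fun n => norm_nonneg _)
    (f := fun n => (K ^ n / n.factorial) / ra K g)
  · intro n
    have hb : 0 ≤ rBt K g n := by
      unfold rBt rB
      positivity
    rw [Real.norm_eq_abs, abs_mul, abs_of_nonneg hb,
      abs_of_nonneg (uGamma_nonneg _ _ hx)]
    have h1 : rBt K g n * uGamma (n + 1) (ra K g * γ) ≤ rBt K g n * n.factorial :=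
      mul_le_mul_of_nonneg_left (uGamma_le_factorial n _ hx) hb
    refine h1.trans (le_of_eq ?_)
    unfold rBt rB
    have hfac : (0 : ℝ) < n.factorial := by positivity
    field_simp
    ring
  · exact (Real.summable_pow_div_factorial K).div_const _

/-- convergence of the double series appearing in the CDF of the minimum. -/
theorem stmt_3 (Kx gx Ky gy : ℝ) (hKx : 0 ≤ Kx) (hgx : 0 < gx) (hKy : 0 ≤ Ky) (hgy : 0 < gy)
    (γ : ℝ) (hγ : 0 ≤ γ) :
    Summable (fun k : ℕ => ∑ n ∈ Finset.range (k + 1),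
      rBt Kx gx n * rBt Ky gy (k - n) * uGamma (n + 1) (ra Kx gx * γ) *
        uGamma ((k - n : ℕ) + 1) (ra Ky gy * γ)) := by
  have h := (summable_norm_sum_mul_range_of_summable_norm
    (f := fun n => rBt Kx gx n * uGamma (n + 1) (ra Kx gx * γ))
    (g := fun n => rBt Ky gy n * uGamma (n + 1) (ra Ky gy * γ))
    (summable_aux Kx gx hKx hgx γ hγ) (summable_aux Ky gy hKy hgy γ hγ)).of_norm
  refine h.congr fun k => ?_
  apply Finset.sum_congr rfl
  intro n _

  ring
end

section
/- Let X and Y be independent real random variables such that X has the Rician power density with parameters (K_x, γ̄_x) and Y has the Rician power density with parameters (K_y, γ̄_y). Then Z = min(X, Y) has probability density function, for γ > 0, f_Z(γ) = A_x A_y Σ_{k=0}^∞ Σ_{n=0}^k B̃_x(n) B̃_y(k−n) [ a_x^{n+1} (k−n)! Σ_{m₁=0}^{k−n} (a_y^{m₁}/m₁!) γ^{n+m₁} e^{−(a_x+a_y)γ} + a_y^{k−n+1} n! Σ_{m₂=0}^{n} (a_x^{m₂}/m₂!) γ^{k−n+m₂} e^{−(a_x+a_y)γ} ]. -/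
open MeasureTheory Set
open scoped ProbabilityTheory
open Real Filter Topology

lemma exp_eq_tsum' (y : ℝ) : Real.exp y = ∑' j : ℕ, y ^ j / j.factorial := by
  rw [Real.exp_eq_exp_ℝ, NormedSpace.exp_eq_tsum_div]

lemma cast_two_fact_le (k : ℕ) : ((2*k).factorial : ℝ) ≤ 4 ^ k * (k.factorial : ℝ)^2 := by
  have h1 : (2*k).choose k ≤ 4 ^ k := by
    calc (2*k).choose k ≤ ∑ i ∈ Finset.range (2*k+1), (2*k).choose i :=
          Finset.single_le_sum (fun i _ => Nat.zero_le _) (by simp; omega)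
    _ = 2 ^ (2*k) := Nat.sum_range_choose _
    _ = 4 ^ k := by rw [pow_mul]; norm_num
  have h2 : (2*k).factorial = (2*k).choose k * (k.factorial * k.factorial) := by
    have := Nat.choose_mul_factorial_mul_factorial (Nat.le_mul_of_pos_left k (by norm_num) : k ≤ 2*k)
    have h3 : 2*k - k = k := by omega
    rw [h3] at this; rw [← this]; ring
  have : ((2*k).factorial : ℝ) = ((2*k).choose k : ℝ) * (k.factorial * k.factorial) := by
    exact_mod_cast congrArg (Nat.cast (R := ℝ)) h2
  rw [this]
  have h4 : ((2*k).choose k : ℝ) ≤ (4:ℝ) ^ k := by exact_mod_cast h1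
  have h5 : (0:ℝ) < (k.factorial : ℝ) := by exact_mod_cast k.factorial_pos
  nlinarith [sq_nonneg ((k.factorial : ℝ))]

/-- termwise bound -/
lemma term_le (x : ℝ) (hx : 0 ≤ x) (k : ℕ) :
    x ^ k / (k.factorial : ℝ)^2 ≤ (2 * Real.sqrt x) ^ (2*k) / ((2*k).factorial : ℝ) := by
  have h0 : (2 * Real.sqrt x) ^ (2*k) = 4^k * x^k := by
    rw [pow_mul]
    have h : (2 * Real.sqrt x) ^ 2 = 4 * x := by
      rw [mul_pow]; rw [Real.sq_sqrt hx]; norm_num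
    rw [h, mul_pow]
  rw [h0, div_le_div_iff₀ (by positivity) (by exact_mod_cast (2*k).factorial_pos)]
  calc x ^ k * ((2*k).factorial : ℝ) ≤ x^k * (4 ^ k * (k.factorial : ℝ)^2) := by
        have := cast_two_fact_le k
        have hxk : (0:ℝ) ≤ x ^ k := by positivity
        nlinarith
  _ = 4 ^ k * x ^ k * (k.factorial:ℝ)^2 := by ring

lemma summable_pow_div_factorial_sq (x : ℝ) : Summable (fun k : ℕ => x ^ k / (k.factorial : ℝ)^2) := by
  apply Summable.of_norm
  refine Summable.of_nonneg_of_le (fun k => norm_nonneg _) (fun k => ?_) (Real.summable_pow_div_factorial |x|)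
  rw [norm_div, norm_pow, norm_pow, Real.norm_natCast, Real.norm_eq_abs]
  have h1 : (1:ℝ) ≤ (k.factorial:ℝ) := by exact_mod_cast k.factorial_pos
  have h2 : (0:ℝ) ≤ |x| ^ k := by positivity
  rw [div_le_div_iff₀ (by positivity) (by positivity)]
  have h3 : (k.factorial:ℝ) ≤ (k.factorial:ℝ)^2 := by nlinarith
  calc |x| ^ k * (k.factorial:ℝ) ≤ |x| ^ k * (k.factorial:ℝ)^2 :=
        mul_le_mul_of_nonneg_left h3 h2
  _ = |x| ^ k * (k.factorial:ℝ)^2 := rfl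

lemma tsum_pow_div_factorial_sq_le (x : ℝ) (hx : 0 ≤ x) :
    ∑' k : ℕ, x ^ k / (k.factorial : ℝ)^2 ≤ Real.exp (2 * Real.sqrt x) := by
  have hsum2 : Summable (fun j : ℕ => (2*Real.sqrt x)^j / (j.factorial : ℝ)) :=
    Real.summable_pow_div_factorial _
  calc ∑' k : ℕ, x ^ k / (k.factorial : ℝ)^2
      ≤ ∑' k : ℕ, (2*Real.sqrt x) ^ (2*k) / ((2*k).factorial : ℝ) := by
        apply Summable.tsum_le_tsum (fun k => term_le x hx k) (summable_pow_div_factorial_sq x)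
        exact hsum2.comp_injective (fun a b => by omega)
    _ ≤ ∑' j : ℕ, (2*Real.sqrt x)^j / (j.factorial : ℝ) := by
        exact tsum_comp_le_tsum_of_inj hsum2 (fun j => by positivity) (fun a b => by omega)
    _ = Real.exp (2 * Real.sqrt x) := (exp_eq_tsum' _).symm


lemma two_sqrt_le {x c : ℝ} (hx : 0 ≤ x) (hc : 0 < c) : 2 * Real.sqrt x ≤ c + x / c := by
  have hs := Real.sq_sqrt hx
  have h0 := Real.sqrt_nonneg x
  have h := sq_nonneg (Real.sqrt x - c)
  have key : 2 * Real.sqrt x ≤ (c^2 + x)/c := by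
    rw [le_div_iff₀ hc]; nlinarith
  have heq : (c^2 + x)/c = c + x/c := by field_simp
  linarith [heq ▸ key]

section basic
variable {K g : ℝ} (hK : 0 ≤ K) (hg : 0 < g)
include hK hg

lemma ra_pos : 0 < ra K g := div_pos (by linarith) hg
lemma rA_pos : 0 < rA K g := mul_pos (ra_pos hK hg) (Real.exp_pos _)
lemma rB_nonneg (k : ℕ) : 0 ≤ rB K g k := by
  have := (ra_pos hK hg).le; unfold rB; positivity

lemma rB_mul_pow (u : ℝ) (k : ℕ) : rB K g k * u ^ k = (K * ra K g * u) ^ k / (k.factorial : ℝ)^2 := by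
  unfold rB; rw [mul_pow, mul_pow]; ring

lemma summable_rB (u : ℝ) : Summable (fun k => rB K g k * u ^ k) := by
  have h : ∀ k, rB K g k * u ^ k = (K * ra K g * u)^k / (k.factorial : ℝ)^2 :=
    rB_mul_pow hK hg u
  simpa only [h] using summable_pow_div_factorial_sq (K * ra K g * u)

lemma tsum_rB_nonneg {u : ℝ} (hu : 0 ≤ u) : 0 ≤ ∑' k, rB K g k * u ^ k :=
  tsum_nonneg fun k => mul_nonneg (rB_nonneg hK hg k) (pow_nonneg hu _)

lemma tsum_rB_le {u : ℝ} (hu : 0 ≤ u) :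
    ∑' k, rB K g k * u ^ k ≤ Real.exp (2*K+1) * Real.exp (ra K g * u / 2) := by
  have ha := ra_pos hK hg
  have hx : 0 ≤ K * ra K g * u := by positivity
  have h1 : ∑' k, rB K g k * u ^ k ≤ Real.exp (2 * Real.sqrt (K * ra K g * u)) := by
    simp only [rB_mul_pow hK hg u]
    exact tsum_pow_div_factorial_sq_le _ hx
  refine h1.trans ?_
  rw [← Real.exp_add]
  apply Real.exp_le_exp.2
  have h2 := two_sqrt_le hx (by linarith : (0:ℝ) < 2*K+1)
  refine h2.trans ?_
  have h3 : K * ra K g * u / (2*K+1) ≤ ra K g * u / 2 := by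
    rw [div_le_div_iff₀ (by linarith) (by norm_num)]
    nlinarith [mul_nonneg ha.le hu]
  linarith

lemma continuous_tsum_rB : Continuous (fun u : ℝ => ∑' k, rB K g k * u ^ k) := by
  rw [continuous_iff_continuousAt]
  intro u₀
  set R : ℝ := |u₀| + 1 with hR
  have hball : ContinuousOn (fun u : ℝ => ∑' k, rB K g k * u ^ k) (Metric.ball 0 R) := by
    have hsum : Summable (fun k => rB K g k * R ^ k) := summable_rB hK hg R
    refine (tendstoUniformlyOn_tsum hsum (fun k x hx => ?_)).continuousOn
      (Frequently.of_forall fun n => ?_)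
    · rw [Real.norm_eq_abs, abs_mul, abs_of_nonneg (rB_nonneg hK hg k), abs_pow]
      have hxR : |x| ≤ R := by
        rw [Metric.mem_ball, Real.dist_eq, sub_zero] at hx; exact hx.le
      exact mul_le_mul_of_nonneg_left
        (pow_le_pow_left₀ (abs_nonneg x) hxR k) (rB_nonneg hK hg k)
    · exact Continuous.continuousOn (by continuity)
  exact hball.continuousAt (Metric.isOpen_ball.mem_nhds
    (by rw [Metric.mem_ball, Real.dist_eq, sub_zero]; linarith))

lemma density_eq_indicator : ricianDensity K g =
    (Ioi (0:ℝ)).indicator (fun u => rA K g * Real.exp (-(ra K g) * u) * ∑' k, rB K g k * u ^ k) := by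
  funext u
  by_cases h : 0 < u <;> simp [ricianDensity, h, indicator_of_mem, indicator_of_notMem, mem_Ioi]

omit hK hg in
lemma density_nonneg (hK : 0 ≤ K) (hg : 0 < g) (u : ℝ) : 0 ≤ ricianDensity K g u := by
  unfold ricianDensity
  split
  · exact mul_nonneg (mul_nonneg (rA_pos hK hg).le (Real.exp_pos _).le)
      (tsum_rB_nonneg hK hg (by linarith))
  · rfl

lemma measurable_density : Measurable (ricianDensity K g) := by
  rw [density_eq_indicator hK hg]
  have hc : Continuous fun u : ℝ => rA K g * Real.exp (-(ra K g) * u) * ∑' k, rB K g k * u ^ k :=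
    (continuous_const.mul ((continuous_const.mul continuous_id).rexp)).mul (continuous_tsum_rB hK hg)
  exact hc.measurable.indicator measurableSet_Ioi

lemma continuousAt_density {t : ℝ} (ht : 0 < t) : ContinuousAt (ricianDensity K g) t := by
  have hcont : ContinuousAt (fun u => rA K g * Real.exp (-(ra K g) * u) * ∑' k, rB K g k * u ^ k) t := by
    exact Continuous.continuousAt
      ((continuous_const.mul ((continuous_const.mul continuous_id).rexp)).mul (continuous_tsum_rB hK hg))
  refine hcont.congr ?_
  filter_upwards [Ioi_mem_nhds ht] with s hs
  simp [ricianDensity, (mem_Ioi.1 hs)]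

lemma integrable_density : Integrable (ricianDensity K g) := by
  have ha := ra_pos hK hg
  have hint : Integrable ((Ioi (0:ℝ)).indicator
      (fun u => (rA K g * Real.exp (2*K+1)) * Real.exp (-(ra K g/2) * u))) := by
    refine (IntegrableOn.integrable_indicator ?_ measurableSet_Ioi)
    exact ((exp_neg_integrableOn_Ioi 0 (by linarith : 0 < ra K g / 2)).const_mul _)
  refine Integrable.mono' hint ((measurable_density hK hg).aestronglyMeasurable) ?_
  refine Eventually.of_forall fun u => ?_
  rw [Real.norm_eq_abs, abs_of_nonneg (density_nonneg hK hg u)]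
  by_cases h : 0 < u
  · rw [indicator_of_mem (mem_Ioi.2 h)]
    unfold ricianDensity
    rw [if_pos h]
    have h1 := tsum_rB_le hK hg h.le
    have h2 : rA K g * Real.exp (-(ra K g) * u) * (∑' k, rB K g k * u ^ k)
        ≤ rA K g * Real.exp (-(ra K g) * u) * (Real.exp (2*K+1) * Real.exp (ra K g * u / 2)) := by
      exact mul_le_mul_of_nonneg_left h1
        (mul_nonneg (rA_pos hK hg).le (Real.exp_pos _).le)
    refine h2.trans (le_of_eq ?_)
    simp only [mul_assoc, ← Real.exp_add]
    congr 2
    ring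
  · rw [indicator_of_notMem (by simpa using h)]
    unfold ricianDensity
    rw [if_neg h]

end basic

/-! ### Elementary improper integral -/

noncomputable def expPoly (b : ℝ) (k : ℕ) (t : ℝ) : ℝ :=
  (∑ m ∈ Finset.range (k+1), (b*t)^m / m.factorial) * Real.exp (-b*t)

lemma hasDerivAt_expPoly (b : ℝ) (k : ℕ) (t : ℝ) :
    HasDerivAt (expPoly b k) (-(b^(k+1) * t^k / k.factorial) * Real.exp (-b*t)) t := by
  have hP : HasDerivAt (fun t => ∑ m ∈ Finset.range (k+1), (b*t)^m / m.factorial)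
      (b * ∑ m ∈ Finset.range k, (b*t)^m / m.factorial) t := by
    have h1 : HasDerivAt (fun t => ∑ m ∈ Finset.range (k+1), (b*t)^m / m.factorial)
        (∑ m ∈ Finset.range (k+1), (m : ℝ) * (b*t)^(m-1) * b / m.factorial) t := by
      apply HasDerivAt.fun_sum
      intro m _
      have hbt : HasDerivAt (fun t : ℝ => b * t) b t := by
        simpa using (hasDerivAt_id t).const_mul b
      exact ((hasDerivAt_pow m (b*t)).comp t hbt).div_const _
    convert h1 using 1
    rw [Finset.sum_range_succ' (fun m => (m : ℝ) * (b*t)^(m-1) * b / m.factorial) k]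
    simp only [Nat.cast_zero, zero_mul, pow_zero, Nat.factorial_zero, Nat.cast_one, zero_div, add_zero]
    rw [Finset.mul_sum]
    apply Finset.sum_congr rfl
    intro m _
    rw [Nat.factorial_succ]
    push_cast
    have hm : ((m:ℝ) + 1) ≠ 0 := by positivity
    field_simp
  have hE : HasDerivAt (fun t : ℝ => Real.exp (-b*t)) (Real.exp (-b*t) * (-b)) t := by
    have hb : HasDerivAt (fun t : ℝ => -b*t) (-b) t := by
      simpa using (hasDerivAt_id t).const_mul (-b)
    exact hb.exp
  have := hP.fun_mul hE
  refine this.congr_deriv ?_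
  rw [Finset.sum_range_succ]
  field_simp
  ring

lemma tendsto_expPoly (b : ℝ) (hb : 0 < b) (k : ℕ) :
    Tendsto (expPoly b k) atTop (𝓝 0) := by
  have h : ∀ t : ℝ, expPoly b k t = ∑ m ∈ Finset.range (k+1), ((b*t)^m * Real.exp (-(b*t))) / m.factorial := by
    intro t
    unfold expPoly
    rw [Finset.sum_mul]
    apply Finset.sum_congr rfl
    intro m _
    rw [neg_mul]
    ring
  rw [show expPoly b k = (fun t => ∑ m ∈ Finset.range (k+1), ((b*t)^m * Real.exp (-(b*t))) / m.factorial) from funext h]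
  have hzero : (0:ℝ) = ∑ m ∈ Finset.range (k+1), (0:ℝ) / (m.factorial : ℝ) := by simp
  rw [hzero]
  apply tendsto_finset_sum
  intro m _
  apply Tendsto.div_const
  have hbt : Tendsto (fun t : ℝ => b * t) atTop atTop :=
    Tendsto.const_mul_atTop hb tendsto_id
  have := (tendsto_pow_mul_exp_neg_atTop_nhds_zero m).comp hbt
  simpa [Function.comp_def] using this

lemma integral_Ioi_pow_mul_exp {b t : ℝ} (hb : 0 < b) (ht : 0 ≤ t) (k : ℕ) :
    (∫ u in Ioi t, u ^ k * Real.exp (-b*u)) = ((k.factorial : ℝ) / b^(k+1)) * expPoly b k t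
      ∧ IntegrableOn (fun u => u ^ k * Real.exp (-b*u)) (Ioi t) := by
  have hC : (0:ℝ) < (k.factorial : ℝ) / b^(k+1) := by positivity
  set C := (k.factorial : ℝ) / b^(k+1) with hCdef
  have hderiv : ∀ x ∈ Ici t, HasDerivAt (fun s => -(C * expPoly b k s)) (x ^ k * Real.exp (-b*x)) x := by
    intro x _
    have := ((hasDerivAt_expPoly b k x).const_mul C).fun_neg
    refine this.congr_deriv ?_
    rw [hCdef]
    have hbne : b ^ (k+1) ≠ 0 := by positivity
    have hfne : (k.factorial : ℝ) ≠ 0 := by positivity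
    field_simp
  have hpos : ∀ x ∈ Ioi t, 0 ≤ x ^ k * Real.exp (-b*x) := by
    intro x hx
    have : (0:ℝ) ≤ x := le_trans ht (le_of_lt hx)
    positivity
  have htend : Tendsto (fun s => -(C * expPoly b k s)) atTop (𝓝 0) := by
    have := ((tendsto_expPoly b hb k).const_mul C).neg
    simpa using this
  constructor
  · have := integral_Ioi_of_hasDerivAt_of_nonneg
      ((hderiv t self_mem_Ici).continuousAt.continuousWithinAt)
      (fun x hx => hderiv x (Ioi_subset_Ici_self hx)) hpos htend
    rw [this]; ring
  · exact integrableOn_Ioi_deriv_of_nonneg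
      ((hderiv t self_mem_Ici).continuousAt.continuousWithinAt)
      (fun x hx => hderiv x (Ioi_subset_Ici_self hx)) hpos htend

lemma expPoly_nonneg {b : ℝ} (hb : 0 < b) {t : ℝ} (ht : 0 ≤ t) (k : ℕ) : 0 ≤ expPoly b k t := by
  unfold expPoly
  have : (0:ℝ) ≤ ∑ m ∈ Finset.range (k+1), (b*t)^m / m.factorial :=
    Finset.sum_nonneg fun m _ => by positivity
  positivity

lemma expPoly_le_one {b : ℝ} (hb : 0 < b) {t : ℝ} (ht : 0 ≤ t) (k : ℕ) : expPoly b k t ≤ 1 := by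
  unfold expPoly
  have h1 : ∑ m ∈ Finset.range (k+1), (b*t)^m / m.factorial ≤ Real.exp (b*t) := by
    rw [exp_eq_tsum' (b*t)]
    exact Summable.sum_le_tsum (Finset.range (k+1)) (fun m _ => by positivity)
      (Real.summable_pow_div_factorial _)
  calc (∑ m ∈ Finset.range (k+1), (b*t)^m / m.factorial) * Real.exp (-b*t)
      ≤ Real.exp (b*t) * Real.exp (-b*t) := by
        exact mul_le_mul_of_nonneg_right h1 (Real.exp_pos _).le
    _ = 1 := by rw [← Real.exp_add]; simp

lemma expPoly_zero (b : ℝ) (k : ℕ) : expPoly b k 0 = 1 := by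
  unfold expPoly
  rw [Finset.sum_eq_single 0]
  · simp
  · intro m _ hm
    rw [mul_zero, zero_pow hm]
    simp
  · simp

/-! ### Survival function -/

noncomputable def rS (K g t : ℝ) : ℝ := ∫ u in Ioi t, ricianDensity K g u

section surv
variable {K g : ℝ} (hK : 0 ≤ K) (hg : 0 < g)
include hK hg

lemma rA_rB_fact (k : ℕ) :
    rA K g * (rB K g k * ((k.factorial : ℝ) / ra K g ^ (k+1))) = Real.exp (-K) * (K^k / k.factorial) := by
  have ha := (ra_pos hK hg).ne'
  have hf : ((k.factorial : ℝ)) ≠ 0 := by positivity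
  unfold rA rB
  field_simp
  ring

lemma summable_v {t : ℝ} (ht : 0 ≤ t) :
    Summable (fun k => rB K g k * (((k.factorial : ℝ) / ra K g ^ (k+1)) * expPoly (ra K g) k t)) := by
  have ha := ra_pos hK hg
  refine Summable.of_nonneg_of_le (fun k => ?_) (fun k => ?_)
    ((Real.summable_pow_div_factorial K).mul_right (1 / ra K g))
  · have h1 := rB_nonneg hK hg k
    have h2 := expPoly_nonneg ha ht k
    positivity
  · have h2 := expPoly_le_one ha ht k
    have h3 := expPoly_nonneg ha ht k
    have hb := rB_nonneg hK hg k
    have key : rB K g k * ((k.factorial : ℝ) / ra K g ^ (k+1)) = K^k / k.factorial * (1 / ra K g) := by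
      have hf : ((k.factorial : ℝ)) ≠ 0 := by positivity
      unfold rB
      field_simp
      ring
    calc rB K g k * (((k.factorial : ℝ) / ra K g ^ (k+1)) * expPoly (ra K g) k t)
        ≤ rB K g k * (((k.factorial : ℝ) / ra K g ^ (k+1)) * 1) := by
          gcongr
    _ = K^k / k.factorial * (1 / ra K g) := by rw [mul_one]; exact key

lemma rS_eq {t : ℝ} (ht : 0 ≤ t) :
    rS K g t = rA K g * ∑' k : ℕ,
      rB K g k * (((k.factorial : ℝ) / ra K g ^ (k+1)) * expPoly (ra K g) k t) := by
  have ha := ra_pos hK hg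
  have hApos := rA_pos hK hg
  set a := ra K g with hadef
  set F : ℕ → ℝ → ℝ := fun k u => (rA K g * rB K g k) * (u ^ k * Real.exp (-a*u)) with hF
  have hval : ∀ k, (∫ u in Ioi t, u ^ k * Real.exp (-a*u))
      = ((k.factorial : ℝ) / a^(k+1)) * expPoly a k t := fun k => (integral_Ioi_pow_mul_exp ha ht k).1
  have hFint : ∀ k, IntegrableOn (F k) (Ioi t) := fun k =>
    ((integral_Ioi_pow_mul_exp ha ht k).2.const_mul _)
  have hFnonneg : ∀ k, ∀ u ∈ Ioi t, 0 ≤ F k u := by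
    intro k u hu
    have hu0 : (0:ℝ) ≤ u := le_trans ht (le_of_lt hu)
    have := rB_nonneg hK hg k
    positivity
  have hcongr : EqOn (ricianDensity K g) (fun u => ∑' k : ℕ, F k u) (Ioi t) := by
    intro u hu
    have hu0 : 0 < u := lt_of_le_of_lt ht hu
    show ricianDensity K g u = _
    rw [ricianDensity, if_pos hu0]
    rw [show rA K g * Real.exp (-a * u) * (∑' k, rB K g k * u ^ k)
      = ∑' k, (rA K g * Real.exp (-a*u)) * (rB K g k * u ^ k) from (tsum_mul_left).symm]
    exact tsum_congr fun k => by rw [hF]; ring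
  have hlin : ∀ k, (∫⁻ u in Ioi t, ‖F k u‖₊) = ENNReal.ofReal ((rA K g * rB K g k) * (((k.factorial : ℝ) / a^(k+1)) * expPoly a k t)) := by
    intro k
    rw [show (∫⁻ u in Ioi t, (‖F k u‖₊ : ENNReal)) = ∫⁻ u in Ioi t, ‖F k u‖ₑ from rfl, ← ofReal_integral_norm_eq_lintegral_enorm (hFint k)]
    congr 1
    rw [← hval k, ← integral_const_mul]
    refine setIntegral_congr_fun measurableSet_Ioi (fun u hu => ?_)
    rw [Real.norm_eq_abs, abs_of_nonneg (hFnonneg k u hu)]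
  have hbound : ∀ k, (rA K g * rB K g k) * (((k.factorial : ℝ) / a^(k+1)) * expPoly a k t)
      ≤ Real.exp (-K) * (K^k / k.factorial) := by
    intro k
    have h2 := expPoly_le_one ha ht k
    have h3 := expPoly_nonneg ha ht k
    have hb := rB_nonneg hK hg k
    calc (rA K g * rB K g k) * (((k.factorial : ℝ) / a^(k+1)) * expPoly a k t)
        ≤ (rA K g * rB K g k) * (((k.factorial : ℝ) / a^(k+1)) * 1) := by gcongr
      _ = Real.exp (-K) * (K^k / k.factorial) := by
          rw [mul_one, mul_assoc]; exact rA_rB_fact hK hg k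
  have hne : (∑' k : ℕ, ∫⁻ u in Ioi t, ‖F k u‖₊) ≠ ⊤ := by
    have hle : (∑' k : ℕ, ∫⁻ u in Ioi t, ‖F k u‖₊)
        ≤ ∑' k : ℕ, ENNReal.ofReal (Real.exp (-K) * (K^k / k.factorial)) := by
      refine ENNReal.tsum_le_tsum (fun k => ?_)
      rw [hlin k]
      exact ENNReal.ofReal_le_ofReal (hbound k)
    refine ne_top_of_le_ne_top ?_ hle
    rw [← ENNReal.ofReal_tsum_of_nonneg (fun k => by positivity)
      (((Real.summable_pow_div_factorial K).mul_left (Real.exp (-K))))]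
    exact ENNReal.ofReal_ne_top
  have hmeas : ∀ k, AEStronglyMeasurable (F k) (volume.restrict (Ioi t)) := by
    intro k
    exact (Continuous.aestronglyMeasurable (by continuity))
  calc rS K g t = ∫ u in Ioi t, ∑' k, F k u :=
        setIntegral_congr_fun measurableSet_Ioi hcongr
    _ = ∑' k, ∫ u in Ioi t, F k u := integral_tsum hmeas hne
    _ = ∑' k, rA K g * (rB K g k * (((k.factorial : ℝ) / a^(k+1)) * expPoly a k t)) := by
        refine tsum_congr fun k => ?_
        rw [hF]
        simp only []
        rw [integral_const_mul, hval k]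
        ring
    _ = rA K g * ∑' k, rB K g k * (((k.factorial : ℝ) / a^(k+1)) * expPoly a k t) := tsum_mul_left

lemma rS_zero : rS K g 0 = 1 := by
  rw [rS_eq hK hg le_rfl]
  simp only [expPoly_zero, mul_one]
  rw [← tsum_mul_left]
  rw [tsum_congr (fun k => rA_rB_fact hK hg k)]
  rw [tsum_mul_left, ← exp_eq_tsum', ← Real.exp_add]
  simp

lemma rS_nonneg (t : ℝ) : 0 ≤ rS K g t :=
  setIntegral_nonneg measurableSet_Ioi (fun u _ => density_nonneg hK hg u)

lemma rS_antitone : Antitone (rS K g) := by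
  intro t₁ t₂ h
  exact setIntegral_mono_set ((integrable_density hK hg).integrableOn)
    (Eventually.of_forall fun u => density_nonneg hK hg u)
    (HasSubset.Subset.eventuallyLE (Ioi_subset_Ioi h))

lemma rS_le_one {t : ℝ} (ht : 0 ≤ t) : rS K g t ≤ 1 := by
  rw [← rS_zero hK hg]
  exact rS_antitone hK hg ht

lemma rS_split {c s : ℝ} (hcs : c ≤ s) :
    rS K g c = (∫ u in c..s, ricianDensity K g u) + rS K g s := by
  have hint := (integrable_density (K := K) (g := g) hK hg).integrableOn (s := Ioi c)
  rw [intervalIntegral.integral_of_le hcs]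
  unfold rS
  rw [← Ioc_union_Ioi_eq_Ioi hcs]
  rw [setIntegral_union (Ioc_disjoint_Ioi le_rfl) measurableSet_Ioi
    ((integrable_density hK hg).integrableOn) ((integrable_density hK hg).integrableOn)]

lemma hasDerivAt_rS {t : ℝ} (ht : 0 < t) :
    HasDerivAt (rS K g) (-(ricianDensity K g t)) t := by
  set c := t/2 with hc
  have hc0 : 0 < c := by positivity
  have hct : c < t := by rw [hc]; linarith
  have hF : HasDerivAt (fun s => rS K g c - ∫ u in c..s, ricianDensity K g u)
      (-(ricianDensity K g t)) t := by
    have h1 : HasDerivAt (fun s => ∫ u in c..s, ricianDensity K g u) (ricianDensity K g t) t := by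
      refine intervalIntegral.integral_hasDerivAt_right
        ((integrable_density hK hg).intervalIntegrable)
        (((measurable_density hK hg).stronglyMeasurable).stronglyMeasurableAtFilter) ?_
      exact continuousAt_density hK hg ht
    simpa using h1.const_sub (rS K g c)
  refine hF.congr_of_eventuallyEq ?_
  filter_upwards [Ioi_mem_nhds hct] with s hs
  have := rS_split hK hg (le_of_lt (mem_Ioi.1 hs))
  linarith

lemma tendsto_rS : Tendsto (rS K g) atTop (𝓝 0) := by
  have h1 : Tendsto (fun s => ∫ u in (0:ℝ)..s, ricianDensity K g u) atTop (𝓝 (rS K g 0)) :=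
    intervalIntegral_tendsto_integral_Ioi 0 ((integrable_density hK hg).integrableOn) tendsto_id
  have h2 : Tendsto (fun s => rS K g 0 - ∫ u in (0:ℝ)..s, ricianDensity K g u) atTop (𝓝 0) := by
    have := (tendsto_const_nhds (x := rS K g 0) (f := atTop)).sub h1
    simpa using this
  refine h2.congr' ?_
  filter_upwards [eventually_ge_atTop (0:ℝ)] with s hs
  have := rS_split hK hg hs
  linarith

lemma lintegral_density_Ioi (t : ℝ) :
    ∫⁻ u in Ioi t, ENNReal.ofReal (ricianDensity K g u) = ENNReal.ofReal (rS K g t) := by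
  rw [← ofReal_integral_eq_lintegral_ofReal ((integrable_density hK hg).integrableOn)
    (Eventually.of_forall fun u => density_nonneg hK hg u)]
  rfl

lemma lintegral_density_Iic :
    ∫⁻ u in Iic (0:ℝ), ENNReal.ofReal (ricianDensity K g u) = 0 := by
  rw [setLIntegral_congr_fun measurableSet_Iic
    (fun u (hu : u ∈ Iic (0:ℝ)) => ?_), lintegral_zero]
  rw [ricianDensity, if_neg (by simpa using hu)]
  simp

end surv

/-! ### Pointwise product identities -/

lemma per_term {K1 g1 K2 g2 : ℝ} (hK1 : 0 ≤ K1) (hg1 : 0 < g1) (hK2 : 0 ≤ K2) (hg2 : 0 < g2)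
    (γ : ℝ) (n j : ℕ) :
    Real.exp (-(ra K1 g1) * γ) * ((rB K1 g1 n * γ^n) *
      (rB K2 g2 j * (((j.factorial : ℝ) / ra K2 g2 ^ (j+1)) * expPoly (ra K2 g2) j γ)))
    = rBt K1 g1 n * rBt K2 g2 j * (ra K1 g1 ^ (n + 1) * ((j.factorial : ℝ)) *
        (∑ m ∈ Finset.range (j + 1),
          ra K2 g2 ^ m / (m.factorial : ℝ) * γ ^ (n + m) * Real.exp (-(ra K1 g1 + ra K2 g2) * γ))) := by
  have ha1 := (ra_pos hK1 hg1).ne'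
  have ha2 := (ra_pos hK2 hg2).ne'
  set a1 := ra K1 g1
  set a2 := ra K2 g2
  have hsum : (∑ m ∈ Finset.range (j + 1),
        a2 ^ m / (m.factorial : ℝ) * γ ^ (n + m) * Real.exp (-(a1 + a2) * γ))
      = (∑ m ∈ Finset.range (j + 1), (a2*γ) ^ m / (m.factorial : ℝ))
        * (γ ^ n * (Real.exp (-a1 * γ) * Real.exp (-a2 * γ))) := by
    rw [Finset.sum_mul]
    apply Finset.sum_congr rfl
    intro m _
    rw [← Real.exp_add, pow_add, mul_pow]
    rw [show -a1 * γ + -a2 * γ = -(a1+a2)*γ by ring]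
    ring
  rw [hsum]
  unfold expPoly rBt
  rw [show ra K1 g1 = a1 from rfl, show ra K2 g2 = a2 from rfl]
  have hfj : ((j.factorial : ℝ)) ≠ 0 := by positivity
  have hp1 : (a1:ℝ) ^ (n+1) ≠ 0 := pow_ne_zero _ ha1
  have hp2 : (a2:ℝ) ^ (j+1) ≠ 0 := pow_ne_zero _ ha2
  field_simp

section twodist
variable {Kx gx Ky gy : ℝ} (hKx : 0 ≤ Kx) (hgx : 0 < gx) (hKy : 0 ≤ Ky) (hgy : 0 < gy)
include hKx hgx hKy hgy

lemma prod_density_surv {γ : ℝ} (hγ : 0 < γ) :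
    ricianDensity Kx gx γ * rS Ky gy γ
      = rA Kx gx * rA Ky gy * ∑' k : ℕ, ∑ n ∈ Finset.range (k+1),
          Real.exp (-(ra Kx gx) * γ) * ((rB Kx gx n * γ^n) *
            (rB Ky gy (k-n) * ((((k-n).factorial : ℝ) / ra Ky gy ^ (k-n+1)) * expPoly (ra Ky gy) (k-n) γ))) := by
  have hax := ra_pos hKx hgx
  set u : ℕ → ℝ := fun n => rB Kx gx n * γ^n with hu
  set w : ℕ → ℝ := fun j => rB Ky gy j * (((j.factorial : ℝ) / ra Ky gy ^ (j+1)) * expPoly (ra Ky gy) j γ) with hw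
  have hsu : Summable fun n => ‖u n‖ := by
    refine (summable_rB hKx hgx γ).abs.congr fun n => ?_
    rw [Real.norm_eq_abs]
  have hsw : Summable fun j => ‖w j‖ := by
    refine (summable_v hKy hgy hγ.le).abs.congr fun j => ?_
    rw [Real.norm_eq_abs]
  have hcauchy : (∑' n, u n) * (∑' j, w j)
      = ∑' k, ∑ n ∈ Finset.range (k+1), u n * w (k-n) :=
    tsum_mul_tsum_eq_tsum_sum_range_of_summable_norm hsu hsw
  rw [ricianDensity, if_pos hγ, rS_eq hKy hgy hγ.le]
  calc rA Kx gx * Real.exp (-(ra Kx gx) * γ) * (∑' n, u n) * (rA Ky gy * ∑' j, w j)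
      = rA Kx gx * rA Ky gy * (Real.exp (-(ra Kx gx) * γ) * ((∑' n, u n) * (∑' j, w j))) := by ring
    _ = rA Kx gx * rA Ky gy * (Real.exp (-(ra Kx gx) * γ) * ∑' k, ∑ n ∈ Finset.range (k+1), u n * w (k-n)) := by
        rw [hcauchy]
    _ = rA Kx gx * rA Ky gy * ∑' k, Real.exp (-(ra Kx gx) * γ) * ∑ n ∈ Finset.range (k+1), u n * w (k-n) := by
        rw [tsum_mul_left]
    _ = _ := by
        congr 1
        refine tsum_congr fun k => ?_
        rw [Finset.mul_sum]

lemma summable_cauchy : ∀ {γ : ℝ}, 0 < γ → Summable (fun k => ∑ n ∈ Finset.range (k+1),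
    (rB Kx gx n * γ^n) * (rB Ky gy (k-n) * ((((k-n).factorial : ℝ) / ra Ky gy ^ (k-n+1)) * expPoly (ra Ky gy) (k-n) γ))) := by
  intro γ hγ
  have hsu : Summable fun n => ‖rB Kx gx n * γ^n‖ := by
    refine (summable_rB hKx hgx γ).abs.congr fun n => ?_
    rw [Real.norm_eq_abs]
  have hsw : Summable fun j => ‖rB Ky gy j * (((j.factorial : ℝ) / ra Ky gy ^ (j+1)) * expPoly (ra Ky gy) j γ)‖ := by
    refine (summable_v hKy hgy hγ.le).abs.congr fun j => ?_
    rw [Real.norm_eq_abs]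
  exact (hasSum_sum_range_mul_of_summable_norm hsu hsw).summable

end twodist

section main2
variable {Kx gx Ky gy : ℝ} (hKx : 0 ≤ Kx) (hgx : 0 < gx) (hKy : 0 ≤ Ky) (hgy : 0 < gy)
include hKx hgx hKy hgy

lemma density_min_eq {γ : ℝ} (hγ : 0 < γ) :
    rA Kx gx * rA Ky gy * ∑' k : ℕ, ∑ n ∈ Finset.range (k + 1),
        rBt Kx gx n * rBt Ky gy (k - n) *
          (ra Kx gx ^ (n + 1) * (((k - n).factorial : ℝ)) *
              (∑ m₁ ∈ Finset.range (k - n + 1),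
                ra Ky gy ^ m₁ / (m₁.factorial : ℝ) * γ ^ (n + m₁) *
                  Real.exp (-(ra Kx gx + ra Ky gy) * γ)) +
            ra Ky gy ^ (k - n + 1) * ((n.factorial : ℝ)) *
              (∑ m₂ ∈ Finset.range (n + 1),
                ra Kx gx ^ m₂ / (m₂.factorial : ℝ) * γ ^ (k - n + m₂) *
                  Real.exp (-(ra Kx gx + ra Ky gy) * γ)))
    = ricianDensity Kx gx γ * rS Ky gy γ + ricianDensity Ky gy γ * rS Kx gx γ := by
  have hrefl : ∀ (k : ℕ) (f : ℕ → ℝ), ∑ n ∈ Finset.range (k+1), f (k-n) = ∑ n ∈ Finset.range (k+1), f n := by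
    intro k f
    rw [← Finset.sum_range_reflect]
    refine Finset.sum_congr rfl fun j hj => ?_
    congr 1
    simp only [Finset.mem_range] at hj
    omega
  have hW1 : ∀ (k n : ℕ),
      rBt Kx gx n * rBt Ky gy (k - n) *
        (ra Kx gx ^ (n + 1) * (((k - n).factorial : ℝ)) *
          (∑ m₁ ∈ Finset.range (k - n + 1),
            ra Ky gy ^ m₁ / (m₁.factorial : ℝ) * γ ^ (n + m₁) *
              Real.exp (-(ra Kx gx + ra Ky gy) * γ)))
      = Real.exp (-(ra Kx gx) * γ) * ((rB Kx gx n * γ^n) *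
          (rB Ky gy (k-n) * ((((k-n).factorial : ℝ) / ra Ky gy ^ (k-n+1)) * expPoly (ra Ky gy) (k-n) γ))) :=
    fun k n => (per_term hKx hgx hKy hgy γ n (k-n)).symm
  have hW2 : ∀ (k n : ℕ), n ∈ Finset.range (k+1) →
      rBt Kx gx n * rBt Ky gy (k - n) *
        (ra Ky gy ^ (k - n + 1) * ((n.factorial : ℝ)) *
          (∑ m₂ ∈ Finset.range (n + 1),
            ra Kx gx ^ m₂ / (m₂.factorial : ℝ) * γ ^ (k - n + m₂) *
              Real.exp (-(ra Kx gx + ra Ky gy) * γ)))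
      = Real.exp (-(ra Ky gy) * γ) * ((rB Ky gy (k-n) * γ^(k-n)) *
          (rB Kx gx n * (((n.factorial : ℝ) / ra Kx gx ^ (n+1)) * expPoly (ra Kx gx) n γ))) := by
    intro k n _
    have h := per_term hKy hgy hKx hgx γ (k-n) n
    rw [h]
    rw [show -(ra Ky gy + ra Kx gx) * γ = -(ra Kx gx + ra Ky gy) * γ by ring]
    ring
  have hksum : ∀ k : ℕ,
      (∑ n ∈ Finset.range (k + 1),
        rBt Kx gx n * rBt Ky gy (k - n) *
          (ra Kx gx ^ (n + 1) * (((k - n).factorial : ℝ)) *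
              (∑ m₁ ∈ Finset.range (k - n + 1),
                ra Ky gy ^ m₁ / (m₁.factorial : ℝ) * γ ^ (n + m₁) *
                  Real.exp (-(ra Kx gx + ra Ky gy) * γ)) +
            ra Ky gy ^ (k - n + 1) * ((n.factorial : ℝ)) *
              (∑ m₂ ∈ Finset.range (n + 1),
                ra Kx gx ^ m₂ / (m₂.factorial : ℝ) * γ ^ (k - n + m₂) *
                  Real.exp (-(ra Kx gx + ra Ky gy) * γ))))
      = (∑ n ∈ Finset.range (k+1), Real.exp (-(ra Kx gx) * γ) * ((rB Kx gx n * γ^n) *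
            (rB Ky gy (k-n) * ((((k-n).factorial : ℝ) / ra Ky gy ^ (k-n+1)) * expPoly (ra Ky gy) (k-n) γ))))
        + (∑ n ∈ Finset.range (k+1), Real.exp (-(ra Ky gy) * γ) * ((rB Ky gy n * γ^n) *
            (rB Kx gx (k-n) * ((((k-n).factorial : ℝ) / ra Kx gx ^ (k-n+1)) * expPoly (ra Kx gx) (k-n) γ)))) := by
    intro k
    rw [show (∑ n ∈ Finset.range (k+1), Real.exp (-(ra Ky gy) * γ) * ((rB Ky gy n * γ^n) *
            (rB Kx gx (k-n) * ((((k-n).factorial : ℝ) / ra Kx gx ^ (k-n+1)) * expPoly (ra Kx gx) (k-n) γ))))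
        = ∑ n ∈ Finset.range (k+1), Real.exp (-(ra Ky gy) * γ) * ((rB Ky gy (k-n) * γ^(k-n)) *
            (rB Kx gx (k-(k-n)) * ((((k-(k-n)).factorial : ℝ) / ra Kx gx ^ ((k-(k-n))+1)) * expPoly (ra Kx gx) (k-(k-n)) γ)))
      from (hrefl k (fun n => Real.exp (-(ra Ky gy) * γ) * ((rB Ky gy n * γ^n) *
            (rB Kx gx (k-n) * ((((k-n).factorial : ℝ) / ra Kx gx ^ ((k-n)+1)) * expPoly (ra Kx gx) (k-n) γ))))).symm]
    rw [← Finset.sum_add_distrib]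
    refine Finset.sum_congr rfl fun n hn => ?_
    have hnk : k - (k - n) = n := by
      simp only [Finset.mem_range] at hn; omega
    rw [hnk, mul_add, hW1 k n, hW2 k n hn]
  calc rA Kx gx * rA Ky gy * ∑' k : ℕ, ∑ n ∈ Finset.range (k + 1), _
      = rA Kx gx * rA Ky gy * ((∑' k : ℕ, ∑ n ∈ Finset.range (k+1),
            Real.exp (-(ra Kx gx) * γ) * ((rB Kx gx n * γ^n) *
              (rB Ky gy (k-n) * ((((k-n).factorial : ℝ) / ra Ky gy ^ (k-n+1)) * expPoly (ra Ky gy) (k-n) γ))))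
          + (∑' k : ℕ, ∑ n ∈ Finset.range (k+1),
            Real.exp (-(ra Ky gy) * γ) * ((rB Ky gy n * γ^n) *
              (rB Kx gx (k-n) * ((((k-n).factorial : ℝ) / ra Kx gx ^ (k-n+1)) * expPoly (ra Kx gx) (k-n) γ))))) := by
        rw [tsum_congr hksum]
        congr 1
        refine Summable.tsum_add ?_ ?_
        · refine ((summable_cauchy hKx hgx hKy hgy hγ).mul_left (Real.exp (-(ra Kx gx) * γ))).congr fun k => ?_
          rw [Finset.mul_sum]
        · refine ((summable_cauchy hKy hgy hKx hgx hγ).mul_left (Real.exp (-(ra Ky gy) * γ))).congr fun k => ?_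
          rw [Finset.mul_sum]
    _ = ricianDensity Kx gx γ * rS Ky gy γ + ricianDensity Ky gy γ * rS Kx gx γ := by
        rw [mul_add]
        rw [← prod_density_surv hKx hgx hKy hgy hγ]
        rw [show rA Kx gx * rA Ky gy = rA Ky gy * rA Kx gx from mul_comm _ _]
        rw [← prod_density_surv hKy hgy hKx hgx hγ]

end main2

section main3
variable {Kx gx Ky gy : ℝ} (hKx : 0 ≤ Kx) (hgx : 0 < gx) (hKy : 0 ≤ Ky) (hgy : 0 < gy)
include hKx hgx hKy hgy

lemma integral_h {t : ℝ} (ht : 0 < t) :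
    (∫ γ in Ioi t, (ricianDensity Kx gx γ * rS Ky gy γ + ricianDensity Ky gy γ * rS Kx gx γ))
      = rS Kx gx t * rS Ky gy t
    ∧ IntegrableOn (fun γ => ricianDensity Kx gx γ * rS Ky gy γ + ricianDensity Ky gy γ * rS Kx gx γ) (Ioi t) := by
  have hderiv : ∀ x ∈ Ici t, HasDerivAt (fun s => -(rS Kx gx s * rS Ky gy s))
      (ricianDensity Kx gx x * rS Ky gy x + ricianDensity Ky gy x * rS Kx gx x) x := by
    intro x hx
    have hx0 : 0 < x := lt_of_lt_of_le ht hx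
    have := ((hasDerivAt_rS hKx hgx hx0).fun_mul (hasDerivAt_rS hKy hgy hx0)).fun_neg
    refine this.congr_deriv ?_
    ring
  have hpos : ∀ x ∈ Ioi t, 0 ≤ ricianDensity Kx gx x * rS Ky gy x + ricianDensity Ky gy x * rS Kx gx x := by
    intro x _
    have h1 := density_nonneg hKx hgx x
    have h2 := density_nonneg hKy hgy x
    have h3 := rS_nonneg hKx hgx x
    have h4 := rS_nonneg hKy hgy x
    positivity
  have htend : Tendsto (fun s => -(rS Kx gx s * rS Ky gy s)) atTop (𝓝 0) := by
    have := ((tendsto_rS hKx hgx).mul (tendsto_rS hKy hgy)).neg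
    simpa using this
  constructor
  · have := integral_Ioi_of_hasDerivAt_of_nonneg
      ((hderiv t self_mem_Ici).continuousAt.continuousWithinAt)
      (fun x hx => hderiv x (Ioi_subset_Ici_self hx)) hpos htend
    rw [this]; ring
  · exact integrableOn_Ioi_deriv_of_nonneg
      ((hderiv t self_mem_Ici).continuousAt.continuousWithinAt)
      (fun x hx => hderiv x (Ioi_subset_Ici_self hx)) hpos htend

end main3


/-- the density of the minimum of two independent Rician power random
variables, in fully expanded power-series form. -/
theorem stmt_6 {Ω : Type*} [MeasureSpace Ω] [IsProbabilityMeasure (ℙ : Measure Ω)]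
    (Kx gx Ky gy : ℝ) (hKx : 0 ≤ Kx) (hgx : 0 < gx) (hKy : 0 ≤ Ky) (hgy : 0 < gy)
    (X Y : Ω → ℝ) (hXm : Measurable X) (hYm : Measurable Y)
    (hXY : ProbabilityTheory.IndepFun X Y ℙ)
    (hX : Measure.map X ℙ = volume.withDensity fun u => ENNReal.ofReal (ricianDensity Kx gx u))
    (hY : Measure.map Y ℙ = volume.withDensity fun u => ENNReal.ofReal (ricianDensity Ky gy u)) :
    Measure.map (fun ω => min (X ω) (Y ω)) ℙ
      = volume.withDensity fun γ => ENNReal.ofReal (if 0 < γ then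
          rA Kx gx * rA Ky gy * ∑' k : ℕ, ∑ n ∈ Finset.range (k + 1),
            rBt Kx gx n * rBt Ky gy (k - n) *
              (ra Kx gx ^ (n + 1) * (((k - n).factorial : ℝ)) *
                  (∑ m₁ ∈ Finset.range (k - n + 1),
                    ra Ky gy ^ m₁ / (m₁.factorial : ℝ) * γ ^ (n + m₁) *
                      Real.exp (-(ra Kx gx + ra Ky gy) * γ)) +
                ra Ky gy ^ (k - n + 1) * ((n.factorial : ℝ)) *
                  (∑ m₂ ∈ Finset.range (n + 1),
                    ra Kx gx ^ m₂ / (m₂.factorial : ℝ) * γ ^ (k - n + m₂) *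
                      Real.exp (-(ra Kx gx + ra Ky gy) * γ)))
          else 0) := by
  set μ := Measure.map (fun ω => min (X ω) (Y ω)) ℙ with hμ
  set ν := volume.withDensity fun γ => ENNReal.ofReal (if 0 < γ then
          rA Kx gx * rA Ky gy * ∑' k : ℕ, ∑ n ∈ Finset.range (k + 1),
            rBt Kx gx n * rBt Ky gy (k - n) *
              (ra Kx gx ^ (n + 1) * (((k - n).factorial : ℝ)) *
                  (∑ m₁ ∈ Finset.range (k - n + 1),
                    ra Ky gy ^ m₁ / (m₁.factorial : ℝ) * γ ^ (n + m₁) *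
                      Real.exp (-(ra Kx gx + ra Ky gy) * γ)) +
                ra Ky gy ^ (k - n + 1) * ((n.factorial : ℝ)) *
                  (∑ m₂ ∈ Finset.range (n + 1),
                    ra Kx gx ^ m₂ / (m₂.factorial : ℝ) * γ ^ (k - n + m₂) *
                      Real.exp (-(ra Kx gx + ra Ky gy) * γ)))
          else 0) with hν
  have hMin : Measurable fun ω => min (X ω) (Y ω) := hXm.min hYm
  haveI : IsProbabilityMeasure μ := Measure.isProbabilityMeasure_map hMin.aemeasurable
  -- marginal survival probabilities
  have hXIoi : ∀ t : ℝ, ℙ (X ⁻¹' Ioi t) = ENNReal.ofReal (rS Kx gx t) := by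
    intro t
    rw [← Measure.map_apply hXm measurableSet_Ioi, hX, withDensity_apply _ measurableSet_Ioi,
      lintegral_density_Ioi hKx hgx]
  have hYIoi : ∀ t : ℝ, ℙ (Y ⁻¹' Ioi t) = ENNReal.ofReal (rS Ky gy t) := by
    intro t
    rw [← Measure.map_apply hYm measurableSet_Ioi, hY, withDensity_apply _ measurableSet_Ioi,
      lintegral_density_Ioi hKy hgy]
  have hXIic : ℙ (X ⁻¹' Iic 0) = 0 := by
    rw [← Measure.map_apply hXm measurableSet_Iic, hX, withDensity_apply _ measurableSet_Iic,
      lintegral_density_Iic hKx hgx]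
  have hYIic : ℙ (Y ⁻¹' Iic 0) = 0 := by
    rw [← Measure.map_apply hYm measurableSet_Iic, hY, withDensity_apply _ measurableSet_Iic,
      lintegral_density_Iic hKy hgy]
  -- μ on Ioi t
  have hμIoi : ∀ t : ℝ, μ (Ioi t) = ENNReal.ofReal (rS Kx gx t * rS Ky gy t) := by
    intro t
    rw [hμ, Measure.map_apply hMin measurableSet_Ioi]
    have hpre : (fun ω => min (X ω) (Y ω)) ⁻¹' Ioi t = X ⁻¹' Ioi t ∩ Y ⁻¹' Ioi t := by
      ext ω; simp [lt_min_iff]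
    rw [hpre, hXY.measure_inter_preimage_eq_mul _ _ measurableSet_Ioi measurableSet_Ioi,
      hXIoi t, hYIoi t, ← ENNReal.ofReal_mul (rS_nonneg hKx hgx t)]
  -- μ of Iic 0
  have hμIic : μ (Iic 0) = 0 := by
    rw [hμ, Measure.map_apply hMin measurableSet_Iic]
    have hsub : (fun ω => min (X ω) (Y ω)) ⁻¹' Iic 0 ⊆ X ⁻¹' Iic 0 ∪ Y ⁻¹' Iic 0 := by
      intro ω hω
      simp only [mem_preimage, mem_Iic, min_le_iff] at hω
      rcases hω with h | h
      · exact Or.inl h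
      · exact Or.inr h
    refine le_antisymm (le_trans (measure_mono hsub) ?_) zero_le
    refine le_trans (measure_union_le _ _) ?_
    rw [hXIic, hYIic, add_zero]
  -- ν of Iic 0
  have hνIic : ν (Iic 0) = 0 := by
    rw [hν, withDensity_apply _ measurableSet_Iic]
    rw [setLIntegral_congr_fun measurableSet_Iic
      (fun γ (hγ : γ ∈ Iic (0:ℝ)) => ?_), lintegral_zero]
    rw [if_neg (by simpa using hγ)]
    simp
  -- ν on Ioi t for t > 0
  have hνIoi : ∀ t : ℝ, 0 < t → ν (Ioi t) = ENNReal.ofReal (rS Kx gx t * rS Ky gy t) := by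
    intro t ht
    rw [hν, withDensity_apply _ measurableSet_Ioi]
    have hcongr : ∀ γ ∈ Ioi t, ENNReal.ofReal (if 0 < γ then
          rA Kx gx * rA Ky gy * ∑' k : ℕ, ∑ n ∈ Finset.range (k + 1),
            rBt Kx gx n * rBt Ky gy (k - n) *
              (ra Kx gx ^ (n + 1) * (((k - n).factorial : ℝ)) *
                  (∑ m₁ ∈ Finset.range (k - n + 1),
                    ra Ky gy ^ m₁ / (m₁.factorial : ℝ) * γ ^ (n + m₁) *
                      Real.exp (-(ra Kx gx + ra Ky gy) * γ)) +
                ra Ky gy ^ (k - n + 1) * ((n.factorial : ℝ)) *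
                  (∑ m₂ ∈ Finset.range (n + 1),
                    ra Kx gx ^ m₂ / (m₂.factorial : ℝ) * γ ^ (k - n + m₂) *
                      Real.exp (-(ra Kx gx + ra Ky gy) * γ)))
          else 0)
        = ENNReal.ofReal (ricianDensity Kx gx γ * rS Ky gy γ + ricianDensity Ky gy γ * rS Kx gx γ) := by
      intro γ hγ
      have hγ0 : 0 < γ := lt_trans ht hγ
      rw [if_pos hγ0, density_min_eq hKx hgx hKy hgy hγ0]
    rw [setLIntegral_congr_fun measurableSet_Ioi hcongr]
    rw [← ofReal_integral_eq_lintegral_ofReal (integral_h hKx hgx hKy hgy ht).2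
      (Eventually.of_forall (fun γ => ?_))]
    · rw [(integral_h hKx hgx hKy hgy ht).1]
    · have h1 := density_nonneg hKx hgx γ
      have h2 := density_nonneg hKy hgy γ
      have h3 := rS_nonneg hKx hgx γ
      have h4 := rS_nonneg hKy hgy γ
      positivity
  -- agreement on all Ioi
  have hIoi0 : μ (Ioi (0:ℝ)) = ν (Ioi (0:ℝ)) := by
    have hunion : Ioi (0:ℝ) = ⋃ n : ℕ, Ioi (1/((n:ℝ)+1)) := by
      ext x
      simp only [mem_Ioi, mem_iUnion]
      constructor
      · intro hx
        exact exists_nat_one_div_lt hx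
      · rintro ⟨n, hn⟩
        have : (0:ℝ) < 1/((n:ℝ)+1) := by positivity
        linarith
    have hmono : Monotone fun n : ℕ => Ioi (1/((n:ℝ)+1)) := by
      intro n m hnm
      apply Ioi_subset_Ioi
      gcongr
    have hpos : ∀ n : ℕ, (0:ℝ) < 1/((n:ℝ)+1) := fun n => by positivity
    rw [hunion, hmono.measure_iUnion, hmono.measure_iUnion]
    refine iSup_congr fun n => ?_
    rw [hμIoi _, hνIoi _ (hpos n)]
  have hIoi : ∀ t : ℝ, μ (Ioi t) = ν (Ioi t) := by
    intro t
    rcases lt_or_ge 0 t with ht | ht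
    · rw [hμIoi t, hνIoi t ht]
    · have hsplit : ∀ (m : Measure ℝ), m (Iic 0) = 0 → m (Ioi t) = m (Ioi 0) := by
        intro m hm
        rw [← Ioc_union_Ioi_eq_Ioi ht, measure_union (Ioc_disjoint_Ioi le_rfl) measurableSet_Ioi]
        have : m (Ioc t 0) = 0 :=
          le_antisymm (le_trans (measure_mono Ioc_subset_Iic_self) hm.le) zero_le
        rw [this, zero_add]
      rw [hsplit μ hμIic, hsplit ν hνIic, hIoi0]
  -- total masses agree
  have hsplitu : ∀ (m : Measure ℝ), m univ = m (Iic 0) + m (Ioi 0) := by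
    intro m
    rw [← measure_union (Iic_disjoint_Ioi le_rfl) measurableSet_Ioi, Iic_union_Ioi]
  have huniv : ν univ = μ univ := by
    rw [hsplitu ν, hsplitu μ, hνIic, hμIic, hIoi0]
  haveI : IsFiniteMeasure ν := ⟨by rw [huniv]; exact measure_lt_top μ _⟩
  refine Measure.ext_of_Iic μ ν fun a => ?_
  have hμa : μ (Iic a) = μ univ - μ (Ioi a) := by
    rw [← Set.compl_Ioi, measure_compl measurableSet_Ioi (measure_ne_top μ _)]
  have hνa : ν (Iic a) = ν univ - ν (Ioi a) := by
    rw [← Set.compl_Ioi, measure_compl measurableSet_Ioi (measure_ne_top ν _)]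
  rw [hμa, hνa, huniv, hIoi a]
end
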